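/- arXiv:1510.09011 — 7 statements merged into one kernel-verified Lean document; each statement's English description precedes it below -/
import Mathlib

section
/- For every twice continuously differentiable map X : ℝ³ × ℝ → ℝ³, the Geometric Conservation Law holds pointwise: ∂𝒥/∂τ = Σ over cyclic triples (i,j,k) of ∂/∂ξⁱ [ (a_j × a_k) · ∂X/∂τ ], i.e. the time derivative of the Jacobian equals the ξ-divergence of the mesh-velocity fluxes (a_j × a_k)·X_τ. -/
/-!
Because `X` is `C²`, its second derivative is symmetric: `∂_τ aᵢ = ∂ᵢ X_τ` and `∂ᵢ aⱼ = ∂ⱼ aᵢ`.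
By the product rule each flux derivative splits as
`∂ᵢ((aⱼ × aₖ) · X_τ) = ∂ᵢ(aⱼ × aₖ) · X_τ + (aⱼ × aₖ) · ∂_τ aᵢ`.
Summed over cyclic triples, the first terms vanish by the metric identity `Σ ∂ᵢ(aⱼ × aₖ) = 0`
(its six terms cancel in pairs by symmetry of `∂ᵢ aⱼ` and antisymmetry of `×`), while the second
terms add up to `∂_τ (a₁ · (a₂ × a₃))` by the product rule and the cyclic invariance of the triple
product.
-/

open Matrix

section ProductRules

variable {E G H K : Type*} [NormedAddCommGroup E] [NormedSpace ℝ E]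
  [NormedAddCommGroup G] [NormedSpace ℝ G] [NormedAddCommGroup H] [NormedSpace ℝ H]
  [NormedAddCommGroup K] [NormedSpace ℝ K] {p : E}

theorem ContinuousLinearMap.fderiv_of_bilinear_apply (B : G →L[ℝ] H →L[ℝ] K) {f : E → G}
    {g : E → H} (hf : DifferentiableAt ℝ f p) (hg : DifferentiableAt ℝ g p) (v : E) :
    fderiv ℝ (fun x => B (f x) (g x)) p v = B (fderiv ℝ f p v) (g p) + B (f p) (fderiv ℝ g p v) := by
  rw [B.fderiv_of_bilinear hf hg]
  simp [add_comm]

theorem DifferentiableAt.cross {f g : E → Fin 3 → ℝ} (hf : DifferentiableAt ℝ f p)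
    (hg : DifferentiableAt ℝ g p) : DifferentiableAt ℝ (fun x => f x ⨯₃ g x) p :=
  ((crossProduct : (Fin 3 → ℝ) →ₗ[ℝ] _).toContinuousBilinearMap.hasFDerivAt_of_bilinear
    hf.hasFDerivAt hg.hasFDerivAt).differentiableAt

theorem fderiv_cross_apply {f g : E → Fin 3 → ℝ} (hf : DifferentiableAt ℝ f p)
    (hg : DifferentiableAt ℝ g p) (v : E) :
    fderiv ℝ (fun x => f x ⨯₃ g x) p v = fderiv ℝ f p v ⨯₃ g p + f p ⨯₃ fderiv ℝ g p v :=
  crossProduct.toContinuousBilinearMap.fderiv_of_bilinear_apply hf hg v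

theorem fderiv_dotProduct_apply {n : Type*} [Fintype n] {f g : E → n → ℝ}
    (hf : DifferentiableAt ℝ f p) (hg : DifferentiableAt ℝ g p) (v : E) :
    fderiv ℝ (fun x => f x ⬝ᵥ g x) p v = fderiv ℝ f p v ⬝ᵥ g p + f p ⬝ᵥ fderiv ℝ g p v :=
  (dotProductBilin ℝ ℝ : (n → ℝ) →ₗ[ℝ] (n → ℝ) →ₗ[ℝ] ℝ).toContinuousBilinearMap.fderiv_of_bilinear_apply
    hf hg v

end ProductRules

section SecondDerivative

variable {E F : Type*} [NormedAddCommGroup E] [NormedSpace ℝ E]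
  [NormedAddCommGroup F] [NormedSpace ℝ F] {X : E → F} {p : E}

theorem ContDiffAt.differentiableAt_fderiv_apply (hX : ContDiffAt ℝ 2 X p) (u : E) :
    DifferentiableAt ℝ (fun x => fderiv ℝ X x u) p :=
  ((hX.fderiv_right (m := 1) (by norm_num)).differentiableAt one_ne_zero).clm_apply
    (differentiableAt_const u)

theorem ContDiffAt.fderiv_fderiv_apply_comm (hX : ContDiffAt ℝ 2 X p) (u v : E) :
    fderiv ℝ (fun x => fderiv ℝ X x u) p v = fderiv ℝ (fun x => fderiv ℝ X x v) p u := by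
  have hdX := (hX.fderiv_right (m := 1) (by norm_num)).differentiableAt one_ne_zero
  simp only [fderiv_clm_apply hdX (differentiableAt_const _)]
  simpa using (hX.isSymmSndFDerivAt (by simp)).eq v u

end SecondDerivative

section CyclicSums

variable {E : Type*} [NormedAddCommGroup E] [NormedSpace ℝ E] {p : E}
  {a : Fin 3 → E → Fin 3 → ℝ}

theorem sum_cyclic_fderiv_cross_eq_zero (ha : ∀ i, DifferentiableAt ℝ (a i) p) {u : Fin 3 → E}
    (hsymm : ∀ i j, fderiv ℝ (a i) p (u j) = fderiv ℝ (a j) p (u i)) :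
    fderiv ℝ (fun x => a 1 x ⨯₃ a 2 x) p (u 0) + fderiv ℝ (fun x => a 2 x ⨯₃ a 0 x) p (u 1)
      + fderiv ℝ (fun x => a 0 x ⨯₃ a 1 x) p (u 2) = 0 := by
  simp only [fderiv_cross_apply (ha _) (ha _), hsymm 1 0, hsymm 2 0, hsymm 2 1]
  linear_combination (norm := module) cross_anticomm' (fderiv ℝ (a 0) p (u 1)) (a 2 p)
    + cross_anticomm' (a 1 p) (fderiv ℝ (a 0) p (u 2))
    + cross_anticomm' (fderiv ℝ (a 1) p (u 2)) (a 0 p)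

theorem fderiv_triple_product_apply (ha : ∀ i, DifferentiableAt ℝ (a i) p) (v : E) :
    fderiv ℝ (fun x => a 0 x ⬝ᵥ a 1 x ⨯₃ a 2 x) p v
      = (a 1 p ⨯₃ a 2 p) ⬝ᵥ fderiv ℝ (a 0) p v + (a 2 p ⨯₃ a 0 p) ⬝ᵥ fderiv ℝ (a 1) p v
        + (a 0 p ⨯₃ a 1 p) ⬝ᵥ fderiv ℝ (a 2) p v := by
  rw [fderiv_dotProduct_apply (ha 0) ((ha 1).cross (ha 2)), fderiv_cross_apply (ha 1) (ha 2),
    dotProduct_add, triple_product_permutation (a 0 p) (fderiv ℝ (a 1) p v),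
    triple_product_permutation (a 0 p) (a 1 p), triple_product_permutation (a 1 p),
    dotProduct_comm (fderiv ℝ (a 0) p v), dotProduct_comm (fderiv ℝ (a 1) p v),
    dotProduct_comm (fderiv ℝ (a 2) p v), add_assoc]

end CyclicSums

/-- **The Geometric Conservation Law (GCL).** For any twice continuously
differentiable time-dependent mapping `X(ξ,τ)`, with covariant basis vectors
`a i = ∂X/∂ξ i` and Jacobian `𝒥 = a₁ ⋅ (a₂ × a₃)`, the time derivative of the
Jacobian equals the ξ-divergence of the mesh-velocity fluxes `(a j × a k) ⋅ X_τ`,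
summed over cyclic triples `(i,j,k)`. -/
theorem geometric_conservation_law
    (X : (Fin 3 → ℝ) × ℝ → (Fin 3 → ℝ)) (hX : ContDiff ℝ 2 X)
    (a : Fin 3 → (Fin 3 → ℝ) × ℝ → (Fin 3 → ℝ))
    (ha : ∀ i p, a i p = fderiv ℝ X p (Pi.single i 1, 0))
    (Xτ : (Fin 3 → ℝ) × ℝ → (Fin 3 → ℝ))
    (hXτ : ∀ p, Xτ p = fderiv ℝ X p (0, 1))
    (J : (Fin 3 → ℝ) × ℝ → ℝ)
    (hJ : ∀ p, J p = a 0 p ⬝ᵥ crossProduct (a 1 p) (a 2 p))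
    (p : (Fin 3 → ℝ) × ℝ) :
    fderiv ℝ J p (0, 1)
      = fderiv ℝ (fun x => crossProduct (a 1 x) (a 2 x) ⬝ᵥ Xτ x) p (Pi.single 0 1, 0)
        + fderiv ℝ (fun x => crossProduct (a 2 x) (a 0 x) ⬝ᵥ Xτ x) p (Pi.single 1 1, 0)
        + fderiv ℝ (fun x => crossProduct (a 0 x) (a 1 x) ⬝ᵥ Xτ x) p (Pi.single 2 1, 0) := by
  set e : Fin 3 → (Fin 3 → ℝ) × ℝ := fun i => (Pi.single i 1, 0)
  have hXp : ContDiffAt ℝ 2 X p := hX.contDiffAt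
  have ha_eq : ∀ i, a i = fun x => fderiv ℝ X x (e i) := fun i => funext (ha i)
  have hXτ_eq : Xτ = fun x => fderiv ℝ X x (0, 1) := funext hXτ
  have hda : ∀ i, DifferentiableAt ℝ (a i) p := fun i => by
    rw [ha_eq]; exact hXp.differentiableAt_fderiv_apply _
  have hdXτ : DifferentiableAt ℝ Xτ p := by
    rw [hXτ_eq]; exact hXp.differentiableAt_fderiv_apply _
  have hsymm : ∀ i j, fderiv ℝ (a i) p (e j) = fderiv ℝ (a j) p (e i) := fun i j => by
    simp only [ha_eq]; exact hXp.fderiv_fderiv_apply_comm _ _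
  have hτ : ∀ i, fderiv ℝ Xτ p (e i) = fderiv ℝ (a i) p (0, 1) := fun i => by
    rw [ha_eq, hXτ_eq]; exact hXp.fderiv_fderiv_apply_comm _ _
  have hmetric := congrArg (· ⬝ᵥ Xτ p) (sum_cyclic_fderiv_cross_eq_zero hda hsymm)
  simp only [add_dotProduct, zero_dotProduct] at hmetric
  rw [funext hJ, fderiv_triple_product_apply hda]
  simp only [fderiv_dotProduct_apply ((hda _).cross (hda _)) hdXτ]
  rw [hτ 0, hτ 1, hτ 2]
  linarith
end

section
/- Suppose u and f are continuously differentiable and satisfy the conservation law ∂u/∂t + div_x f = 0 at every point of ℝ³ × ℝ, and let X : ℝ³ × ℝ → ℝ³ be twice continuously differentiable. Define the pullbacks U(ξ,τ) = u(X(ξ,τ),τ) and F(ξ,τ) = f(X(ξ,τ),τ). Then the mapped equation holds pointwise on ℝ³ × ℝ: ∂(𝒥U)/∂τ + Σ over cyclic triples (i,j,k) of ∂/∂ξⁱ [ (a_j × a_k) · ( F − U·∂X/∂τ ) ] = 0; that is, the conservation law remains a conservation law on the reference domain. -/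
/-!
Write `Ja i = a j × a k` for the cyclic triples. Because the second derivatives of `X` commute,
`Σᵢ ∂ᵢ(Ja i) = 0`, which gives the Piola identity `Σᵢ ∂ᵢ(Ja i · G) = Σᵢ Ja i · ∂ᵢG`, and
`∂_τ 𝒥 = Σᵢ Ja i · ∂ᵢX_τ` (the geometric conservation law). Together they reduce the mapped
expression to `𝒥 ∂_τU + Σᵢ Ja i · (∂ᵢF - ∂ᵢU X_τ)`, in which no second derivative of `X` is left.
By the chain rule `∂ᵢU = Du(aᵢ)`, `∂_τU = u_t + Du(X_τ)`, `∂ᵢF = Df(aᵢ)`, and since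
`Σᵢ aᵢ (Ja i)ᵀ = 𝒥 I`, this is `𝒥 (u_t + div f) = 0`.
-/

open Matrix

section Bilinear

variable {𝕜 : Type*} [NontriviallyNormedField 𝕜] [CompleteSpace 𝕜]
  {V E F G : Type*} [NormedAddCommGroup V] [NormedSpace 𝕜 V]
  [NormedAddCommGroup E] [NormedSpace 𝕜 E] [FiniteDimensional 𝕜 E]
  [NormedAddCommGroup F] [NormedSpace 𝕜 F] [FiniteDimensional 𝕜 F]
  [NormedAddCommGroup G] [NormedSpace 𝕜 G]
  {b : V → E} {c : V → F} {p : V}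

theorem LinearMap.differentiableAt_bilinear (B : E →ₗ[𝕜] F →ₗ[𝕜] G)
    (hb : DifferentiableAt 𝕜 b p) (hc : DifferentiableAt 𝕜 c p) :
    DifferentiableAt 𝕜 (fun x => B (b x) (c x)) p :=
  (B.toContinuousBilinearMap.hasFDerivAt_of_bilinear hb.hasFDerivAt
    hc.hasFDerivAt).differentiableAt

theorem LinearMap.fderiv_bilinear_apply (B : E →ₗ[𝕜] F →ₗ[𝕜] G)
    (hb : DifferentiableAt 𝕜 b p) (hc : DifferentiableAt 𝕜 c p) (v : V) :
    fderiv 𝕜 (fun x => B (b x) (c x)) p v =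
      B (fderiv 𝕜 b p v) (c p) + B (b p) (fderiv 𝕜 c p v) := by
  change fderiv 𝕜 (fun x => B.toContinuousBilinearMap (b x) (c x)) p v = _
  rw [B.toContinuousBilinearMap.fderiv_of_bilinear hb hc]
  simp [add_comm]

end Bilinear

section Calculus

variable {𝕜 : Type*} [NontriviallyNormedField 𝕜]
  {V : Type*} [NormedAddCommGroup V] [NormedSpace 𝕜 V] {p : V}

theorem DifferentiableAt.dotProduct [CompleteSpace 𝕜] {ι : Type*} [Fintype ι]
    {b c : V → ι → 𝕜}
    (hb : DifferentiableAt 𝕜 b p) (hc : DifferentiableAt 𝕜 c p) :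
    DifferentiableAt 𝕜 (fun x => b x ⬝ᵥ c x) p :=
  (dotProductBilin 𝕜 𝕜).differentiableAt_bilinear hb hc

theorem fderiv_dotProduct_apply_s4 [CompleteSpace 𝕜] {ι : Type*} [Fintype ι] {b c : V → ι → 𝕜}
    (hb : DifferentiableAt 𝕜 b p) (hc : DifferentiableAt 𝕜 c p) (v : V) :
    fderiv 𝕜 (fun x => b x ⬝ᵥ c x) p v = fderiv 𝕜 b p v ⬝ᵥ c p + b p ⬝ᵥ fderiv 𝕜 c p v :=
  (dotProductBilin 𝕜 𝕜).fderiv_bilinear_apply hb hc v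

theorem DifferentiableAt.crossProduct [CompleteSpace 𝕜] {b c : V → Fin 3 → 𝕜}
    (hb : DifferentiableAt 𝕜 b p) (hc : DifferentiableAt 𝕜 c p) :
    DifferentiableAt 𝕜 (fun x => b x ⨯₃ c x) p :=
  _root_.crossProduct.differentiableAt_bilinear hb hc

theorem fderiv_crossProduct_apply [CompleteSpace 𝕜] {b c : V → Fin 3 → 𝕜}
    (hb : DifferentiableAt 𝕜 b p) (hc : DifferentiableAt 𝕜 c p) (v : V) :
    fderiv 𝕜 (fun x => b x ⨯₃ c x) p v = fderiv 𝕜 b p v ⨯₃ c p + b p ⨯₃ fderiv 𝕜 c p v :=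
  crossProduct.fderiv_bilinear_apply hb hc v

theorem fderiv_fun_fderiv_apply {W : Type*} [NormedAddCommGroup W] [NormedSpace 𝕜 W]
    {X : V → W} (hX : DifferentiableAt 𝕜 (fderiv 𝕜 X) p) (v w : V) :
    fderiv 𝕜 (fun x => fderiv 𝕜 X x v) p w = fderiv 𝕜 (fderiv 𝕜 X) p w v := by
  rw [fderiv_clm_apply hX (differentiableAt_const v)]
  simp

theorem fderiv_comp_prodMk_snd_apply {Y W : Type*} [NormedAddCommGroup Y] [NormedSpace 𝕜 Y]
    [NormedAddCommGroup W] [NormedSpace 𝕜 W] {g : Y × 𝕜 → W} {X : V × 𝕜 → Y} {p : V × 𝕜}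
    (hg : DifferentiableAt 𝕜 g (X p, p.2)) (hX : DifferentiableAt 𝕜 X p) (v : V × 𝕜) :
    fderiv 𝕜 (fun x => g (X x, x.2)) p v = fderiv 𝕜 g (X p, p.2) (fderiv 𝕜 X p v, v.2) := by
  have h : HasFDerivAt (fun x => g (X x, x.2)) _ p :=
    hg.hasFDerivAt.comp p (hX.hasFDerivAt.prodMk hasFDerivAt_snd)
  rw [h.fderiv]
  rfl

theorem ContDiffAt.differentiableAt_fderiv {W : Type*} [NormedAddCommGroup W] [NormedSpace 𝕜 W]
    {X : V → W} (hX : ContDiffAt 𝕜 2 X p) : DifferentiableAt 𝕜 (fderiv 𝕜 X) p :=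
  (hX.fderiv_right (m := 1) le_rfl).differentiableAt one_ne_zero

end Calculus

section Algebra

variable {R : Type*} [CommRing R] (a₀ a₁ a₂ : Fin 3 → R)

-- The vectors `(a₁ ⨯₃ a₂, a₂ ⨯₃ a₀, a₀ ⨯₃ a₁) / (a₀ ⬝ᵥ a₁ ⨯₃ a₂)` form the dual basis
-- of `(a₀, a₁, a₂)`.
theorem cross_dot_smul_add_cyclic (v : Fin 3 → R) :
    (a₁ ⨯₃ a₂ ⬝ᵥ v) • a₀ + (a₂ ⨯₃ a₀ ⬝ᵥ v) • a₁ + (a₀ ⨯₃ a₁ ⬝ᵥ v) • a₂ =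
      (a₀ ⬝ᵥ a₁ ⨯₃ a₂) • v := by
  ext i
  fin_cases i <;>
    simp only [dotProduct, cross_apply, Fin.sum_univ_three, Fin.isValue, Fin.zero_eta, Fin.mk_one,
      Fin.reduceFinMk, cons_val_zero, cons_val_one, cons_val, Pi.add_apply, Pi.smul_apply,
      smul_eq_mul] <;>
    ring

theorem cross_dot_apply_add_cyclic (A : (Fin 3 → R) →ₗ[R] Fin 3 → R) :
    a₁ ⨯₃ a₂ ⬝ᵥ A a₀ + a₂ ⨯₃ a₀ ⬝ᵥ A a₁ + a₀ ⨯₃ a₁ ⬝ᵥ A a₂ =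
      (a₀ ⬝ᵥ a₁ ⨯₃ a₂) * ∑ m, A (Pi.single m 1) m := by
  simp only [← LinearMap.toMatrix'_mulVec A, ← LinearMap.toMatrix'_apply A]
  simp only [dotProduct, cross_apply, mulVec, Fin.sum_univ_three,
    Fin.isValue, cons_val_zero, cons_val_one, cons_val]
  ring

end Algebra

noncomputable section Mapping

local notation "𝔼" => (Fin 3 → ℝ) × ℝ

def covariantBasis (X : 𝔼 → Fin 3 → ℝ) (i : Fin 3) (x : 𝔼) : Fin 3 → ℝ :=
  fderiv ℝ X x (Pi.single i 1, 0)

def meshVelocity (X : 𝔼 → Fin 3 → ℝ) (x : 𝔼) : Fin 3 → ℝ :=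
  fderiv ℝ X x (0, 1)

def jacobian (X : 𝔼 → Fin 3 → ℝ) (x : 𝔼) : ℝ :=
  covariantBasis X 0 x ⬝ᵥ covariantBasis X 1 x ⨯₃ covariantBasis X 2 x

variable {X : 𝔼 → Fin 3 → ℝ} {p : 𝔼}

theorem differentiableAt_covariantBasis (hX : DifferentiableAt ℝ (fderiv ℝ X) p) (i : Fin 3) :
    DifferentiableAt ℝ (covariantBasis X i) p :=
  hX.clm_apply (differentiableAt_const _)

theorem fderiv_covariantBasis_apply (hX : DifferentiableAt ℝ (fderiv ℝ X) p) (i : Fin 3)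
    (w : 𝔼) : fderiv ℝ (covariantBasis X i) p w = fderiv ℝ (fderiv ℝ X) p w (Pi.single i 1, 0) :=
  fderiv_fun_fderiv_apply hX _ w

theorem differentiableAt_meshVelocity (hX : DifferentiableAt ℝ (fderiv ℝ X) p) :
    DifferentiableAt ℝ (meshVelocity X) p :=
  hX.clm_apply (differentiableAt_const _)

theorem fderiv_meshVelocity_apply (hX : DifferentiableAt ℝ (fderiv ℝ X) p) (w : 𝔼) :
    fderiv ℝ (meshVelocity X) p w = fderiv ℝ (fderiv ℝ X) p w (0, 1) :=
  fderiv_fun_fderiv_apply hX _ w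

theorem sum_fderiv_cross_covariantBasis_eq_zero (hX : ContDiffAt ℝ 2 X p) :
    fderiv ℝ (fun x => covariantBasis X 1 x ⨯₃ covariantBasis X 2 x) p (Pi.single 0 1, 0)
      + fderiv ℝ (fun x => covariantBasis X 2 x ⨯₃ covariantBasis X 0 x) p (Pi.single 1 1, 0)
      + fderiv ℝ (fun x => covariantBasis X 0 x ⨯₃ covariantBasis X 1 x) p (Pi.single 2 1, 0)
      = 0 := by
  have hDX := hX.differentiableAt_fderiv
  have ha := differentiableAt_covariantBasis hDX
  have hsymm := hX.isSymmSndFDerivAt (by simp)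
  simp only [fderiv_crossProduct_apply (ha _) (ha _), fderiv_covariantBasis_apply hDX]
  rw [hsymm (Pi.single 1 1, 0) (Pi.single 0 1, 0), hsymm (Pi.single 2 1, 0) (Pi.single 0 1, 0),
    hsymm (Pi.single 2 1, 0) (Pi.single 1 1, 0)]
  set H := fderiv ℝ (fderiv ℝ X) p
  linear_combination
    cross_anticomm' (H (Pi.single 0 1, 0) (Pi.single 1 1, 0)) (covariantBasis X 2 p)
    + cross_anticomm' (covariantBasis X 1 p) (H (Pi.single 0 1, 0) (Pi.single 2 1, 0))
    + cross_anticomm' (H (Pi.single 1 1, 0) (Pi.single 2 1, 0)) (covariantBasis X 0 p)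

theorem piola_identity (hX : ContDiffAt ℝ 2 X p) {G : 𝔼 → Fin 3 → ℝ}
    (hG : DifferentiableAt ℝ G p) :
    fderiv ℝ (fun x => covariantBasis X 1 x ⨯₃ covariantBasis X 2 x ⬝ᵥ G x) p (Pi.single 0 1, 0)
      + fderiv ℝ (fun x => covariantBasis X 2 x ⨯₃ covariantBasis X 0 x ⬝ᵥ G x) p (Pi.single 1 1, 0)
      + fderiv ℝ (fun x => covariantBasis X 0 x ⨯₃ covariantBasis X 1 x ⬝ᵥ G x) p (Pi.single 2 1, 0)
      = covariantBasis X 1 p ⨯₃ covariantBasis X 2 p ⬝ᵥ fderiv ℝ G p (Pi.single 0 1, 0)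
      + covariantBasis X 2 p ⨯₃ covariantBasis X 0 p ⬝ᵥ fderiv ℝ G p (Pi.single 1 1, 0)
      + covariantBasis X 0 p ⨯₃ covariantBasis X 1 p ⬝ᵥ fderiv ℝ G p (Pi.single 2 1, 0) := by
  have ha := differentiableAt_covariantBasis hX.differentiableAt_fderiv
  have hdiv := congrArg (· ⬝ᵥ G p) (sum_fderiv_cross_covariantBasis_eq_zero hX)
  simp only [add_dotProduct, zero_dotProduct] at hdiv
  simp only [fderiv_dotProduct_apply_s4 ((ha _).crossProduct (ha _)) hG]
  linear_combination hdiv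

theorem fderiv_jacobian_time (hX : ContDiffAt ℝ 2 X p) :
    fderiv ℝ (jacobian X) p (0, 1)
      = covariantBasis X 1 p ⨯₃ covariantBasis X 2 p ⬝ᵥ
          fderiv ℝ (meshVelocity X) p (Pi.single 0 1, 0)
      + covariantBasis X 2 p ⨯₃ covariantBasis X 0 p ⬝ᵥ
          fderiv ℝ (meshVelocity X) p (Pi.single 1 1, 0)
      + covariantBasis X 0 p ⨯₃ covariantBasis X 1 p ⬝ᵥ
          fderiv ℝ (meshVelocity X) p (Pi.single 2 1, 0) := by
  have hDX := hX.differentiableAt_fderiv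
  have ha := differentiableAt_covariantBasis hDX
  have hsymm := hX.isSymmSndFDerivAt (by simp)
  unfold jacobian
  rw [fderiv_dotProduct_apply_s4 (ha 0) ((ha 1).crossProduct (ha 2)),
    fderiv_crossProduct_apply (ha 1) (ha 2)]
  simp only [fderiv_covariantBasis_apply hDX, fderiv_meshVelocity_apply hDX]
  rw [hsymm (0, 1) (Pi.single 0 1, 0), hsymm (0, 1) (Pi.single 1 1, 0),
    hsymm (0, 1) (Pi.single 2 1, 0), dotProduct_add,
    triple_product_permutation (covariantBasis X 0 p),
    ← triple_product_permutation _ (covariantBasis X 0 p)]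
  simp only [dotProduct_comm]
  ring

theorem mapped_divergence_eq (hX : ContDiffAt ℝ 2 X p) {U : 𝔼 → ℝ} {F : 𝔼 → Fin 3 → ℝ}
    (hU : DifferentiableAt ℝ U p) (hF : DifferentiableAt ℝ F p) :
    fderiv ℝ (fun x => jacobian X x * U x) p (0, 1)
      + fderiv ℝ (fun x => covariantBasis X 1 x ⨯₃ covariantBasis X 2 x ⬝ᵥ
          (F x - U x • meshVelocity X x)) p (Pi.single 0 1, 0)
      + fderiv ℝ (fun x => covariantBasis X 2 x ⨯₃ covariantBasis X 0 x ⬝ᵥ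
          (F x - U x • meshVelocity X x)) p (Pi.single 1 1, 0)
      + fderiv ℝ (fun x => covariantBasis X 0 x ⨯₃ covariantBasis X 1 x ⬝ᵥ
          (F x - U x • meshVelocity X x)) p (Pi.single 2 1, 0)
      = jacobian X p * fderiv ℝ U p (0, 1)
      + covariantBasis X 1 p ⨯₃ covariantBasis X 2 p ⬝ᵥ
          (fderiv ℝ F p (Pi.single 0 1, 0)
            - fderiv ℝ U p (Pi.single 0 1, 0) • meshVelocity X p)
      + covariantBasis X 2 p ⨯₃ covariantBasis X 0 p ⬝ᵥ
          (fderiv ℝ F p (Pi.single 1 1, 0)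
            - fderiv ℝ U p (Pi.single 1 1, 0) • meshVelocity X p)
      + covariantBasis X 0 p ⨯₃ covariantBasis X 1 p ⬝ᵥ
          (fderiv ℝ F p (Pi.single 2 1, 0)
            - fderiv ℝ U p (Pi.single 2 1, 0) • meshVelocity X p) := by
  have hDX := hX.differentiableAt_fderiv
  have ha := differentiableAt_covariantBasis hDX
  have hXτ := differentiableAt_meshVelocity hDX
  have hJ : DifferentiableAt ℝ (jacobian X) p := (ha 0).dotProduct ((ha 1).crossProduct (ha 2))
  have hG (v : 𝔼) : fderiv ℝ (fun x => F x - U x • meshVelocity X x) p v =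
      fderiv ℝ F p v
        - (U p • fderiv ℝ (meshVelocity X) p v + fderiv ℝ U p v • meshVelocity X p) := by
    rw [fderiv_fun_sub (g := fun x => U x • meshVelocity X x) hF (hU.smul hXτ),
      fderiv_fun_smul hU hXτ]
    simp
  have hpiola := piola_identity hX (G := fun x => F x - U x • meshVelocity X x)
    (hF.sub (hU.smul hXτ))
  have hJt := fderiv_jacobian_time hX
  rw [fderiv_fun_mul hJ hU]
  rw [hG, hG, hG] at hpiola
  -- `simp` also rewrites under the `fderiv` binders, but identically in `hpiola` and in the goal.
  simp only [dotProduct_sub, dotProduct_add, dotProduct_smul, smul_eq_mul, _root_.add_apply,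
    _root_.smul_apply] at hpiola ⊢
  linear_combination hpiola + U p * hJt

theorem reduced_divergence_pullback_eq {u : 𝔼 → ℝ} {f : 𝔼 → Fin 3 → ℝ}
    (hu : DifferentiableAt ℝ u (X p, p.2)) (hf : DifferentiableAt ℝ f (X p, p.2))
    (hX : DifferentiableAt ℝ X p) :
    jacobian X p * fderiv ℝ (fun x => u (X x, x.2)) p (0, 1)
      + covariantBasis X 1 p ⨯₃ covariantBasis X 2 p ⬝ᵥ
          (fderiv ℝ (fun x => f (X x, x.2)) p (Pi.single 0 1, 0)
            - fderiv ℝ (fun x => u (X x, x.2)) p (Pi.single 0 1, 0) • meshVelocity X p)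
      + covariantBasis X 2 p ⨯₃ covariantBasis X 0 p ⬝ᵥ
          (fderiv ℝ (fun x => f (X x, x.2)) p (Pi.single 1 1, 0)
            - fderiv ℝ (fun x => u (X x, x.2)) p (Pi.single 1 1, 0) • meshVelocity X p)
      + covariantBasis X 0 p ⨯₃ covariantBasis X 1 p ⬝ᵥ
          (fderiv ℝ (fun x => f (X x, x.2)) p (Pi.single 2 1, 0)
            - fderiv ℝ (fun x => u (X x, x.2)) p (Pi.single 2 1, 0) • meshVelocity X p)
      = jacobian X p * (fderiv ℝ u (X p, p.2) (0, 1)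
          + ∑ m : Fin 3, fderiv ℝ f (X p, p.2) (Pi.single m 1, 0) m) := by
  set Du := fderiv ℝ u (X p, p.2)
  set Df := fderiv ℝ f (X p, p.2)
  have hUτ :
      fderiv ℝ (fun x => u (X x, x.2)) p (0, 1) = Du (0, 1) + Du (meshVelocity X p, 0) := by
    rw [fderiv_comp_prodMk_snd_apply hu hX, ← map_add, Prod.mk_add_mk, zero_add, add_zero]
    rfl
  have hUξ (i : Fin 3) : fderiv ℝ (fun x => u (X x, x.2)) p (Pi.single i 1, 0) =
      Du (covariantBasis X i p, 0) :=
    fderiv_comp_prodMk_snd_apply hu hX _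
  have hFξ (i : Fin 3) : fderiv ℝ (fun x => f (X x, x.2)) p (Pi.single i 1, 0) =
      Df (covariantBasis X i p, 0) :=
    fderiv_comp_prodMk_snd_apply hf hX _
  have hadj := congrArg (Du.comp (.inl ℝ _ ℝ))
    (cross_dot_smul_add_cyclic (covariantBasis X 0 p) (covariantBasis X 1 p)
      (covariantBasis X 2 p) (meshVelocity X p))
  have htr := cross_dot_apply_add_cyclic (covariantBasis X 0 p) (covariantBasis X 1 p)
      (covariantBasis X 2 p) (Df.comp (.inl ℝ _ ℝ)).toLinearMap
  simp only [map_add, map_smul, ContinuousLinearMap.comp_apply, ContinuousLinearMap.inl_apply,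
    smul_eq_mul] at hadj
  simp only [ContinuousLinearMap.coe_coe, ContinuousLinearMap.comp_apply,
    ContinuousLinearMap.inl_apply] at htr
  simp only [hUτ, hUξ, hFξ, dotProduct_sub, dotProduct_smul, smul_eq_mul]
  unfold jacobian
  linear_combination htr - hadj

end Mapping

/-- **A conservation law remains a conservation law on the reference domain.**
If `u, f` are continuously differentiable and satisfy `∂u/∂t + div_x f = 0`
everywhere, and `X(ξ,τ)` is a twice continuously differentiable time-dependent
mapping with covariant basis `a i = ∂X/∂ξ i`, Jacobian `𝒥 = a₁ ⋅ (a₂ × a₃)` and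
mesh velocity `X_τ`, then the pullbacks `U(ξ,τ) = u(X(ξ,τ),τ)`,
`F(ξ,τ) = f(X(ξ,τ),τ)` satisfy the mapped conservation law
`∂(𝒥U)/∂τ + Σ_{(i,j,k) cyclic} ∂/∂ξ i [(a j × a k) ⋅ (F − U X_τ)] = 0`. -/
theorem mapped_conservation_law
    (u : (Fin 3 → ℝ) × ℝ → ℝ) (hu : ContDiff ℝ 1 u)
    (f : (Fin 3 → ℝ) × ℝ → (Fin 3 → ℝ)) (hf : ContDiff ℝ 1 f)
    (hcons : ∀ p : (Fin 3 → ℝ) × ℝ,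
      fderiv ℝ u p (0, 1) + ∑ m : Fin 3, fderiv ℝ f p (Pi.single m 1, 0) m = 0)
    (X : (Fin 3 → ℝ) × ℝ → (Fin 3 → ℝ)) (hX : ContDiff ℝ 2 X)
    (a : Fin 3 → (Fin 3 → ℝ) × ℝ → (Fin 3 → ℝ))
    (ha : ∀ i p, a i p = fderiv ℝ X p (Pi.single i 1, 0))
    (Xτ : (Fin 3 → ℝ) × ℝ → (Fin 3 → ℝ))
    (hXτ : ∀ p, Xτ p = fderiv ℝ X p (0, 1))
    (J : (Fin 3 → ℝ) × ℝ → ℝ)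
    (hJ : ∀ p, J p = a 0 p ⬝ᵥ crossProduct (a 1 p) (a 2 p))
    (U : (Fin 3 → ℝ) × ℝ → ℝ) (hU : ∀ p : (Fin 3 → ℝ) × ℝ, U p = u (X p, p.2))
    (F : (Fin 3 → ℝ) × ℝ → (Fin 3 → ℝ)) (hF : ∀ p : (Fin 3 → ℝ) × ℝ, F p = f (X p, p.2))
    (p : (Fin 3 → ℝ) × ℝ) :
    fderiv ℝ (fun x => J x * U x) p (0, 1)
      + fderiv ℝ (fun x => crossProduct (a 1 x) (a 2 x) ⬝ᵥ (F x - U x • Xτ x)) p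
          (Pi.single 0 1, 0)
      + fderiv ℝ (fun x => crossProduct (a 2 x) (a 0 x) ⬝ᵥ (F x - U x • Xτ x)) p
          (Pi.single 1 1, 0)
      + fderiv ℝ (fun x => crossProduct (a 0 x) (a 1 x) ⬝ᵥ (F x - U x • Xτ x)) p
          (Pi.single 2 1, 0) = 0 := by
  obtain rfl : a = covariantBasis X := funext₂ ha
  obtain rfl : Xτ = meshVelocity X := funext hXτ
  obtain rfl : J = jacobian X := funext hJ
  obtain rfl : U = fun x => u (X x, x.2) := funext hU
  obtain rfl : F = fun x => f (X x, x.2) := funext hF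
  have hXp : DifferentiableAt ℝ X p := hX.differentiable two_ne_zero p
  have hup := hu.differentiable one_ne_zero (X p, p.2)
  have hfp := hf.differentiable one_ne_zero (X p, p.2)
  have hgraph := hXp.prodMk (differentiableAt_snd (p := p))
  have hUp : DifferentiableAt ℝ (fun x => u (X x, x.2)) p := hup.comp p hgraph
  have hFp : DifferentiableAt ℝ (fun x => f (X x, x.2)) p := hfp.comp p hgraph
  beta_reduce
  rw [mapped_divergence_eq hX.contDiffAt hUp hFp,
    reduced_divergence_pullback_eq hup hfp hXp, hcons, mul_zero]
end

section
/- Let N ≥ 1 and let x₀,…,x_N ∈ [−1,1] with weights w₀,…,w_N ∈ ℝ be a quadrature rule exact for polynomials of degree at most 2N−1. Then the summation-by-parts property holds: for all real polynomials f, g of degree at most N, Σ_{j=0}^N w_j f′(x_j) g(x_j) = f(1)g(1) − f(−1)g(−1) − Σ_{j=0}^N w_j f(x_j) g′(x_j). -/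
/- Since `(f g)' = f' g + f g'` has degree at most `2N − 1`, the rule integrates it exactly, and
by the fundamental theorem of calculus its integral over `[−1, 1]` is `f(1)g(1) − f(−1)g(−1)`. -/

open Polynomial

namespace Polynomial

theorem natDegree_derivative_mul_le {R : Type*} [CommSemiring R] {f g : R[X]} {m n : ℕ}
    (hf : f.natDegree ≤ m) (hg : g.natDegree ≤ n) :
    (derivative (f * g)).natDegree ≤ m + n - 1 :=
  (natDegree_derivative_le _).trans <|
    Nat.sub_le_sub_right (natDegree_mul_le.trans (Nat.add_le_add hf hg)) 1

theorem integral_eval_derivative (p : ℝ[X]) (a b : ℝ) :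
    ∫ t in a..b, (derivative p).eval t = p.eval b - p.eval a :=
  intervalIntegral.integral_eq_sub_of_hasDerivAt (fun t _ => p.hasDerivAt t)
    (p.derivative.continuous.intervalIntegrable _ _)

theorem sum_eval_derivative_mul {ι R : Type*} [CommSemiring R] (s : Finset ι) (w x : ι → R)
    (f g : R[X]) :
    ∑ j ∈ s, w j * (derivative (f * g)).eval (x j)
      = ∑ j ∈ s, w j * (derivative f).eval (x j) * g.eval (x j)
        + ∑ j ∈ s, w j * f.eval (x j) * (derivative g).eval (x j) := by
  rw [← Finset.sum_add_distrib]
  refine Finset.sum_congr rfl fun j _ => ?_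
  simp only [derivative_mul, eval_add, eval_mul]
  ring

end Polynomial

theorem quadrature_summation_by_parts_general
    (N : ℕ)
    (x : Fin (N + 1) → ℝ)
    (w : Fin (N + 1) → ℝ)
    (hexact : ∀ p : Polynomial ℝ, p.natDegree ≤ 2 * N - 1 →
      ∑ j, w j * p.eval (x j) = ∫ t in (-1 : ℝ)..1, p.eval t)
    (f g : Polynomial ℝ) (hf : f.natDegree ≤ N) (hg : g.natDegree ≤ N) :
    ∑ j, w j * (Polynomial.derivative f).eval (x j) * g.eval (x j)
      = f.eval 1 * g.eval 1 - f.eval (-1) * g.eval (-1)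
        - ∑ j, w j * f.eval (x j) * (Polynomial.derivative g).eval (x j) := by
  have hdeg : (derivative (f * g)).natDegree ≤ 2 * N - 1 :=
    two_mul N ▸ natDegree_derivative_mul_le hf hg
  have hexact_fg := hexact _ hdeg
  rw [sum_eval_derivative_mul, integral_eval_derivative, eval_mul, eval_mul] at hexact_fg
  linarith

/-- **Discrete summation-by-parts for a quadrature rule exact to degree `2N−1`.**
For nodes `x₀,…,x_N ∈ [−1,1]` and weights `w₀,…,w_N` with
`Σ_j w_j p(x_j) = ∫_{−1}^1 p` for every polynomial `p` of degree at most `2N−1`,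
and any polynomials `f, g` of degree at most `N`,
`Σ_j w_j f′(x_j) g(x_j) = f(1)g(1) − f(−1)g(−1) − Σ_j w_j f(x_j) g′(x_j)`. -/
theorem quadrature_summation_by_parts
    (N : ℕ) (hN : 1 ≤ N)
    (x : Fin (N + 1) → ℝ) (hx : ∀ j, x j ∈ Set.Icc (-1 : ℝ) 1)
    (w : Fin (N + 1) → ℝ)
    (hexact : ∀ p : Polynomial ℝ, p.natDegree ≤ 2 * N - 1 →
      ∑ j, w j * p.eval (x j) = ∫ t in (-1 : ℝ)..1, p.eval t)
    (f g : Polynomial ℝ) (hf : f.natDegree ≤ N) (hg : g.natDegree ≤ N) :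
    ∑ j, w j * (Polynomial.derivative f).eval (x j) * g.eval (x j)
      = f.eval 1 * g.eval 1 - f.eval (-1) * g.eval (-1)
        - ∑ j, w j * f.eval (x j) * (Polynomial.derivative g).eval (x j) :=
  quadrature_summation_by_parts_general N x w hexact f g hf hg
end

section
/- Let N ≥ 1 and let −1 = x₀ < x₁ < … < x_N = 1 be distinct nodes with weights w₀,…,w_N forming a quadrature rule exact for polynomials of degree at most 2N−1. Let ℓ_j be the Lagrange basis polynomials for these nodes and define the differentiation matrix D with entries D_{ij} = ℓ_j′(x_i). Then for all 0 ≤ i, j ≤ N, w_i D_{ij} + w_j D_{ji} = δ_{iN}δ_{jN} − δ_{i0}δ_{j0}; equivalently, in matrix form W D + Dᵀ W = diag(−1, 0, …, 0, 1), where W = diag(w₀,…,w_N). -/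
/-!
Apply exactness of the quadrature to `(ℓᵢ ℓⱼ)'`, which has degree at most `2N - 1`.
At the nodes `ℓᵢ ℓⱼ` vanishes except where `i = j = k`, so the quadrature sum of
`(ℓᵢ ℓⱼ)' = ℓᵢ' ℓⱼ + ℓᵢ ℓⱼ'` collapses to `wⱼ Dⱼᵢ + wᵢ Dᵢⱼ`, while by the fundamental
theorem of calculus the integral is `(ℓᵢ ℓⱼ)(1) - (ℓᵢ ℓⱼ)(-1) = δᵢₙδⱼₙ - δᵢ₀δⱼ₀`.
-/

open Polynomial Finset

theorem Polynomial.integral_eval_derivative_s13 (p : ℝ[X]) (a b : ℝ) :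
    ∫ t in a..b, (derivative p).eval t = p.eval b - p.eval a :=
  intervalIntegral.integral_deriv_eq_sub' (fun t => p.eval t) (by ext t; exact p.deriv)
    (fun t _ => p.differentiableAt) (derivative p).continuous.continuousOn

namespace Lagrange

variable {F ι : Type*} [Field F] [DecidableEq ι] {s : Finset ι} {v : ι → F} {i j k : ι}

theorem eval_basis (hvs : Set.InjOn v s) (hi : i ∈ s) (hk : k ∈ s) :
    (Lagrange.basis s v i).eval (v k) = if i = k then 1 else 0 := by
  split_ifs with hik
  · subst hik
    exact eval_basis_self hvs hi
  · exact eval_basis_of_ne hik hk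

theorem eval_basis_mul_basis (hvs : Set.InjOn v s) (hi : i ∈ s) (hj : j ∈ s) (hk : k ∈ s) :
    (Lagrange.basis s v i * Lagrange.basis s v j).eval (v k) =
      if i = k ∧ j = k then 1 else 0 := by
  rw [eval_mul, eval_basis hvs hi hk, eval_basis hvs hj hk]
  split_ifs <;> simp_all

theorem natDegree_derivative_basis_mul_basis_le (hvs : Set.InjOn v s) (hi : i ∈ s)
    (hj : j ∈ s) :
    (derivative (Lagrange.basis s v i * Lagrange.basis s v j)).natDegree ≤
      2 * (#s - 1) - 1 := by
  have hprod : (Lagrange.basis s v i * Lagrange.basis s v j).natDegree ≤ 2 * (#s - 1) := by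
    refine natDegree_mul_le.trans_eq ?_
    rw [natDegree_basis hvs hi, natDegree_basis hvs hj, two_mul]
  exact (natDegree_derivative_le _).trans (Nat.sub_le_sub_right hprod 1)

theorem sum_mul_eval_derivative_basis_mul_basis (w : ι → F) (hvs : Set.InjOn v s)
    (hi : i ∈ s) (hj : j ∈ s) :
    ∑ k ∈ s, w k * (derivative (Lagrange.basis s v i * Lagrange.basis s v j)).eval (v k) =
      w i * (derivative (Lagrange.basis s v j)).eval (v i) +
        w j * (derivative (Lagrange.basis s v i)).eval (v j) := by
  have hterm : ∀ k ∈ s,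
      w k * (derivative (Lagrange.basis s v i * Lagrange.basis s v j)).eval (v k) =
        (if i = k then w k * (derivative (Lagrange.basis s v j)).eval (v k) else 0) +
          (if j = k then w k * (derivative (Lagrange.basis s v i)).eval (v k) else 0) := by
    intro k hk
    rw [derivative_mul, eval_add, eval_mul, eval_mul, eval_basis hvs hi hk,
      eval_basis hvs hj hk]
    split_ifs <;> ring
  rw [sum_congr rfl hterm, sum_add_distrib, sum_ite_eq, sum_ite_eq, if_pos hi, if_pos hj]

end Lagrange

theorem differentiation_matrix_sbp_general
    (N : ℕ)
    (x : Fin (N + 1) → ℝ) (hmono : StrictMono x)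
    (hx0 : x 0 = -1) (hxN : x (Fin.last N) = 1)
    (w : Fin (N + 1) → ℝ)
    (hexact : ∀ p : Polynomial ℝ, p.natDegree ≤ 2 * N - 1 →
      ∑ j, w j * p.eval (x j) = ∫ t in (-1 : ℝ)..1, p.eval t)
    (D : Fin (N + 1) → Fin (N + 1) → ℝ)
    (hD : ∀ i j, D i j
      = (Polynomial.derivative (Lagrange.basis Finset.univ x j)).eval (x i)) :
    ∀ i j, w i * D i j + w j * D j i
      = (if i = Fin.last N ∧ j = Fin.last N then (1 : ℝ) else 0)
        - (if i = 0 ∧ j = 0 then (1 : ℝ) else 0) := by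
  intro i j
  have hinj : Set.InjOn x (univ : Finset (Fin (N + 1))) := hmono.injective.injOn
  have hdeg := Lagrange.natDegree_derivative_basis_mul_basis_le hinj (mem_univ i) (mem_univ j)
  rw [card_univ, Fintype.card_fin, Nat.add_sub_cancel] at hdeg
  have key := hexact _ hdeg
  rw [Lagrange.sum_mul_eval_derivative_basis_mul_basis w hinj (mem_univ i) (mem_univ j),
    integral_eval_derivative_s13, ← hx0, ← hxN,
    Lagrange.eval_basis_mul_basis hinj (mem_univ i) (mem_univ j) (mem_univ _),
    Lagrange.eval_basis_mul_basis hinj (mem_univ i) (mem_univ j) (mem_univ _)] at key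
  rw [hD, hD, ← key]

/-- **SBP property of the differentiation matrix.** For distinct nodes
`−1 = x₀ < x₁ < … < x_N = 1` with weights forming a quadrature rule exact for
polynomials of degree at most `2N−1`, the differentiation matrix
`D_{ij} = ℓ_j′(x_i)` (with `ℓ_j` the Lagrange basis polynomials) satisfies
`w_i D_{ij} + w_j D_{ji} = δ_{iN} δ_{jN} − δ_{i0} δ_{j0}`, i.e. in matrix form
`W D + Dᵀ W = diag(−1, 0, …, 0, 1)`. -/
theorem differentiation_matrix_sbp
    (N : ℕ) (hN : 1 ≤ N)
    (x : Fin (N + 1) → ℝ) (hmono : StrictMono x)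
    (hx0 : x 0 = -1) (hxN : x (Fin.last N) = 1)
    (w : Fin (N + 1) → ℝ)
    (hexact : ∀ p : Polynomial ℝ, p.natDegree ≤ 2 * N - 1 →
      ∑ j, w j * p.eval (x j) = ∫ t in (-1 : ℝ)..1, p.eval t)
    (D : Fin (N + 1) → Fin (N + 1) → ℝ)
    (hD : ∀ i j, D i j
      = (Polynomial.derivative (Lagrange.basis Finset.univ x j)).eval (x i)) :
    ∀ i j, w i * D i j + w j * D j i
      = (if i = Fin.last N ∧ j = Fin.last N then (1 : ℝ) else 0)
        - (if i = 0 ∧ j = 0 then (1 : ℝ) else 0) :=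
  differentiation_matrix_sbp_general N x hmono hx0 hxN w hexact D hD
end

section
/- Let N ≥ 1 and let x₀,…,x_N ∈ [−1,1] with weights w₀,…,w_N be a quadrature rule exact for polynomials of degree at most 2N−1. Let F¹, F², F³ and φ be real polynomials in three variables (ξ¹,ξ²,ξ³), each of degree at most N in each variable separately. Then the three-dimensional summation-by-parts identity on the tensor-product grid holds: Σ_{j,k,l=0}^N w_j w_k w_l [ (∂₁F¹ + ∂₂F² + ∂₃F³) φ ](x_j,x_k,x_l) = Σ_{k,l=0}^N w_k w_l [ (F¹φ)(1,x_k,x_l) − (F¹φ)(−1,x_k,x_l) ] + Σ_{j,l=0}^N w_j w_l [ (F²φ)(x_j,1,x_l) − (F²φ)(x_j,−1,x_l) ] + Σ_{j,k=0}^N w_j w_k [ (F³φ)(x_j,x_k,1) − (F³φ)(x_j,x_k,−1) ] − Σ_{j,k,l=0}^N w_j w_k w_l [ F¹∂₁φ + F²∂₂φ + F³∂₃φ ](x_j,x_k,x_l). -/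
/-!
By the product rule, `(∑ᵢ ∂ᵢFⁱ) φ + ∑ᵢ Fⁱ ∂ᵢφ = ∑ᵢ ∂ᵢ(Fⁱφ)`. Restricted to a grid line in
direction `i`, the polynomial `Fⁱφ` has degree at most `2N`, so its derivative has degree at most
`2N - 1` and is integrated exactly by the quadrature rule; by the fundamental theorem of calculus
the line sum is the difference of the values of `Fⁱφ` at the two boundary faces. Summing over
the remaining two grid directions gives the face terms.
-/

open MvPolynomial Polynomial

namespace MvPolynomial

theorem sum_pderiv_mul_add_sum_mul_pderiv {R σ : Type*} [CommSemiring R] [Fintype σ]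
    (F : σ → MvPolynomial σ R) (φ : MvPolynomial σ R) :
    (∑ i, pderiv i (F i)) * φ + ∑ i, F i * pderiv i φ = ∑ i, pderiv i (F i * φ) := by
  simp only [Finset.sum_mul, ← Finset.sum_add_distrib, Derivation.leibniz, smul_eq_mul]
  exact Finset.sum_congr rfl fun i _ => by ring

variable {R σ : Type*} [CommRing R] [DecidableEq σ]

noncomputable def restrictLine (c : σ → R) (i : σ) : MvPolynomial σ R →ₐ[R] R[X] :=
  aeval (Function.update (fun d => Polynomial.C (c d)) i Polynomial.X)

theorem eval_restrictLine (c : σ → R) (i : σ) (p : MvPolynomial σ R) (t : R) :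
    (restrictLine c i p).eval t = eval (Function.update c i t) p := by
  rw [← Polynomial.coe_aeval_eq_eval, restrictLine, ← AlgHom.comp_apply, comp_aeval,
    ← coe_aeval_eq_eval, RingHom.coe_coe]
  congr 2
  funext d
  by_cases h : d = i <;> simp [h]

theorem derivative_restrictLine (c : σ → R) (i : σ) (p : MvPolynomial σ R) :
    derivative (restrictLine c i p) = restrictLine c i (pderiv i p) := by
  induction p using MvPolynomial.induction_on with
  | C a => simp [restrictLine]
  | add p q hp hq => simp [hp, hq]
  | mul_X p d hp =>
    rw [map_mul, derivative_mul, hp, Derivation.leibniz, pderiv_X]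
    by_cases h : d = i <;> simp [h, restrictLine] <;> ring

theorem restrictLine_eq_map_optionEquivLeft (c : σ → R) (i : σ) :
    restrictLine c i = ((Polynomial.mapAlgHom (aeval fun d : {d // d ≠ i} => c d)).comp
      (optionEquivLeft R {d // d ≠ i}).toAlgHom).comp (rename (Equiv.optionSubtypeNe i).symm) := by
  refine algHom_ext fun d => ?_
  by_cases h : d = i
  · subst h
    simp [restrictLine]
  · simp [restrictLine, h]

theorem natDegree_restrictLine_le (c : σ → R) (i : σ) (p : MvPolynomial σ R) :
    (restrictLine c i p).natDegree ≤ degreeOf i p := by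
  rw [restrictLine_eq_map_optionEquivLeft, degreeOf_eq_natDegree]
  exact natDegree_map_le
end MvPolynomial

section Quadrature

variable {ι : Type*} [Fintype ι] (x w : ι → ℝ) {n : ℕ} {a b : ℝ}

theorem quadrature_derivative_eq_sub
    (hexact : ∀ p : ℝ[X], p.natDegree ≤ n → ∑ j, w j * p.eval (x j) = ∫ t in a..b, p.eval t)
    {p : ℝ[X]} (hp : p.natDegree ≤ n + 1) :
    ∑ j, w j * (derivative p).eval (x j) = p.eval b - p.eval a := by
  rw [hexact _ ((natDegree_derivative_le p).trans (by omega))]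
  exact intervalIntegral.integral_eq_sub_of_hasDerivAt (fun t _ => p.hasDerivAt t)
    (p.derivative.continuous.intervalIntegrable _ _)

theorem quadrature_pderiv_eq_sub {σ : Type*} [DecidableEq σ]
    (hexact : ∀ p : ℝ[X], p.natDegree ≤ n → ∑ j, w j * p.eval (x j) = ∫ t in a..b, p.eval t)
    (c : σ → ℝ) (i : σ) {q : MvPolynomial σ ℝ} (hq : degreeOf i q ≤ n + 1) :
    ∑ j, w j * eval (Function.update c i (x j)) (pderiv i q)
      = eval (Function.update c i b) q - eval (Function.update c i a) q := by
  simp only [← eval_restrictLine, ← derivative_restrictLine]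
  exact quadrature_derivative_eq_sub x w hexact ((natDegree_restrictLine_le c i q).trans hq)

end Quadrature

section TensorGrid

variable {ι R : Type*} [Fintype ι] [CommSemiring R] (w : ι → R) (f : ι → ι → ι → R)

theorem sum_tensor_weights_eq_sum_fst :
    ∑ j, ∑ k, ∑ l, w j * w k * w l * f j k l = ∑ k, ∑ l, w k * w l * ∑ j, w j * f j k l := by
  simp only [Finset.mul_sum]
  rw [Finset.sum_comm]
  refine Finset.sum_congr rfl fun k _ => ?_
  rw [Finset.sum_comm]
  exact Finset.sum_congr rfl fun l _ => Finset.sum_congr rfl fun j _ => by ring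

theorem sum_tensor_weights_eq_sum_snd :
    ∑ j, ∑ k, ∑ l, w j * w k * w l * f j k l = ∑ j, ∑ l, w j * w l * ∑ k, w k * f j k l := by
  simp only [Finset.mul_sum]
  refine Finset.sum_congr rfl fun j _ => ?_
  rw [Finset.sum_comm]
  exact Finset.sum_congr rfl fun l _ => Finset.sum_congr rfl fun k _ => by ring

theorem sum_tensor_weights_eq_sum_thd :
    ∑ j, ∑ k, ∑ l, w j * w k * w l * f j k l = ∑ j, ∑ k, w j * w k * ∑ l, w l * f j k l := by
  simp only [Finset.mul_sum]
  exact Finset.sum_congr rfl fun j _ => Finset.sum_congr rfl fun k _ =>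
    Finset.sum_congr rfl fun l _ => by ring

end TensorGrid

theorem three_dimensional_summation_by_parts_general
    (N : ℕ)
    (x : Fin (N + 1) → ℝ)
    (w : Fin (N + 1) → ℝ)
    (hexact : ∀ p : Polynomial ℝ, p.natDegree ≤ 2 * N - 1 →
      ∑ j, w j * p.eval (x j) = ∫ t in (-1 : ℝ)..1, p.eval t)
    (F : Fin 3 → MvPolynomial (Fin 3) ℝ)
    (hF : ∀ i d, MvPolynomial.degreeOf d (F i) ≤ N)
    (φ : MvPolynomial (Fin 3) ℝ)
    (hφ : ∀ d, MvPolynomial.degreeOf d φ ≤ N) :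
    ∑ j, ∑ k, ∑ l, w j * w k * w l *
        MvPolynomial.eval ![x j, x k, x l] ((∑ i : Fin 3, MvPolynomial.pderiv i (F i)) * φ)
      = (∑ k, ∑ l, w k * w l *
            (MvPolynomial.eval ![1, x k, x l] (F 0 * φ)
              - MvPolynomial.eval ![-1, x k, x l] (F 0 * φ)))
        + (∑ j, ∑ l, w j * w l *
            (MvPolynomial.eval ![x j, 1, x l] (F 1 * φ)
              - MvPolynomial.eval ![x j, -1, x l] (F 1 * φ)))
        + (∑ j, ∑ k, w j * w k *
            (MvPolynomial.eval ![x j, x k, 1] (F 2 * φ)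
              - MvPolynomial.eval ![x j, x k, -1] (F 2 * φ)))
        - ∑ j, ∑ k, ∑ l, w j * w k * w l *
            MvPolynomial.eval ![x j, x k, x l] (∑ i : Fin 3, F i * MvPolynomial.pderiv i φ) := by
  have hline (i : Fin 3) (c : Fin 3 → ℝ) :
      ∑ j, w j * eval (Function.update c i (x j)) (pderiv i (F i * φ))
        = eval (Function.update c i 1) (F i * φ) - eval (Function.update c i (-1)) (F i * φ) :=
    quadrature_pderiv_eq_sub x w hexact c i <|
      (degreeOf_mul_le _ _ _).trans (by have := hF i i; have := hφ i; omega)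
  have update_vec (a b c t : ℝ) :
      Function.update ![a, b, c] 0 t = ![t, b, c] ∧ Function.update ![a, b, c] 1 t = ![a, t, c] ∧
        Function.update ![a, b, c] 2 t = ![a, b, t] := by
    refine ⟨?_, ?_, ?_⟩ <;> funext d <;> fin_cases d <;> rfl
  have face₀ (k l) : ∑ j, w j * eval ![x j, x k, x l] (pderiv 0 (F 0 * φ))
      = eval ![1, x k, x l] (F 0 * φ) - eval ![-1, x k, x l] (F 0 * φ) := by
    simpa only [update_vec] using hline 0 ![0, x k, x l]
  have face₁ (j l) : ∑ k, w k * eval ![x j, x k, x l] (pderiv 1 (F 1 * φ))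
      = eval ![x j, 1, x l] (F 1 * φ) - eval ![x j, -1, x l] (F 1 * φ) := by
    simpa only [update_vec] using hline 1 ![x j, 0, x l]
  have face₂ (j k) : ∑ l, w l * eval ![x j, x k, x l] (pderiv 2 (F 2 * φ))
      = eval ![x j, x k, 1] (F 2 * φ) - eval ![x j, x k, -1] (F 2 * φ) := by
    simpa only [update_vec] using hline 2 ![x j, x k, 0]
  have divergence (v : Fin 3 → ℝ) : eval v ((∑ i, pderiv i (F i)) * φ)
      = eval v (pderiv 0 (F 0 * φ)) + eval v (pderiv 1 (F 1 * φ)) + eval v (pderiv 2 (F 2 * φ))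
        - eval v (∑ i, F i * pderiv i φ) := by
    rw [← map_add, ← map_add, ← Fin.sum_univ_three fun i => pderiv i (F i * φ),
      ← sum_pderiv_mul_add_sum_mul_pderiv, map_add, add_sub_cancel_right]
  conv_lhs =>
    simp only [divergence, mul_sub, mul_add, Finset.sum_sub_distrib, Finset.sum_add_distrib]
  -- each rewrite acts on the leftmost remaining triple sum: the `i = 0, 1, 2` terms in turn
  rw [sum_tensor_weights_eq_sum_fst, sum_tensor_weights_eq_sum_snd, sum_tensor_weights_eq_sum_thd]
  simp only [face₀, face₁, face₂]

/-- **Three-dimensional summation-by-parts on the tensor-product grid.** For a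
1D quadrature rule on `[−1,1]` exact for polynomials of degree at most `2N−1`,
and trivariate polynomials `F¹, F², F³, φ` of degree at most `N` in each
variable separately, the discrete divergence sum on the tensor-product grid
equals the boundary-face quadrature terms minus the discrete sum with the
derivatives moved onto `φ`. -/
theorem three_dimensional_summation_by_parts
    (N : ℕ) (hN : 1 ≤ N)
    (x : Fin (N + 1) → ℝ) (hx : ∀ j, x j ∈ Set.Icc (-1 : ℝ) 1)
    (w : Fin (N + 1) → ℝ)
    (hexact : ∀ p : Polynomial ℝ, p.natDegree ≤ 2 * N - 1 →
      ∑ j, w j * p.eval (x j) = ∫ t in (-1 : ℝ)..1, p.eval t)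
    (F : Fin 3 → MvPolynomial (Fin 3) ℝ)
    (hF : ∀ i d, MvPolynomial.degreeOf d (F i) ≤ N)
    (φ : MvPolynomial (Fin 3) ℝ)
    (hφ : ∀ d, MvPolynomial.degreeOf d φ ≤ N) :
    ∑ j, ∑ k, ∑ l, w j * w k * w l *
        MvPolynomial.eval ![x j, x k, x l] ((∑ i : Fin 3, MvPolynomial.pderiv i (F i)) * φ)
      = (∑ k, ∑ l, w k * w l *
            (MvPolynomial.eval ![1, x k, x l] (F 0 * φ)
              - MvPolynomial.eval ![-1, x k, x l] (F 0 * φ)))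
        + (∑ j, ∑ l, w j * w l *
            (MvPolynomial.eval ![x j, 1, x l] (F 1 * φ)
              - MvPolynomial.eval ![x j, -1, x l] (F 1 * φ)))
        + (∑ j, ∑ k, w j * w k *
            (MvPolynomial.eval ![x j, x k, 1] (F 2 * φ)
              - MvPolynomial.eval ![x j, x k, -1] (F 2 * φ)))
        - ∑ j, ∑ k, ∑ l, w j * w k * w l *
            MvPolynomial.eval ![x j, x k, x l] (∑ i : Fin 3, F i * MvPolynomial.pderiv i φ) :=
  three_dimensional_summation_by_parts_general N x w hexact F hF φ hφ
end

section
/- Let A⁺, A⁻ ∈ Mₘ(ℝ) be symmetric matrices, and set A = A⁺ + A⁻, |A| = A⁺ − A⁻, and |A⁻| = −A⁻. Let Q, Q_∞ ∈ ℝᵐ and define the upwind boundary flux F* = ½ A (Q + Q_∞) − ½ |A| (Q_∞ − Q). Then the completed-square boundary identity holds: (F* − ½ A Q)ᵀ Q = ½ Qᵀ A⁺ Q + ½ (Q − Q_∞)ᵀ |A⁻| (Q − Q_∞) − ½ (Q_∞)ᵀ |A⁻| Q_∞. -/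
open Matrix

/-! Since `A = A⁺ + A⁻` and `|A| = A⁺ − A⁻`, the flux residual simplifies to
`F* − ½AQ = ½A⁺Q − ½A⁻Q + A⁻Q_∞`. Expanding `(Q − Q_∞)ᵀA⁻(Q − Q_∞)` for the symmetric `A⁻`
produces exactly the cross term `QᵀA⁻Q_∞`, so both sides agree. -/

namespace Matrix

variable {n K : Type*} [Fintype n]

theorem IsSymm.dotProduct_mulVec_comm [CommSemiring K] {B : Matrix n n K} (hB : B.IsSymm)
    (x y : n → K) : x ⬝ᵥ (B *ᵥ y) = y ⬝ᵥ (B *ᵥ x) := by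
  rw [dotProduct_mulVec, ← mulVec_transpose, hB.eq, dotProduct_comm]

theorem IsSymm.dotProduct_mulVec_sub_sub [CommRing K] {B : Matrix n n K} (hB : B.IsSymm)
    (x y : n → K) :
    (x - y) ⬝ᵥ (B *ᵥ (x - y)) = x ⬝ᵥ (B *ᵥ x) - 2 * (x ⬝ᵥ (B *ᵥ y)) + y ⬝ᵥ (B *ᵥ y) := by
  simp only [mulVec_sub, sub_dotProduct, dotProduct_sub, hB.dotProduct_mulVec_comm y x]
  ring

end Matrix

theorem upwind_flux_sub_half_mulVec {n K : Type*} [Fintype n] [Field K] [NeZero (2 : K)]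
    (Ap An : Matrix n n K) (Q Qinf : n → K) :
    (1 / 2 : K) • ((Ap + An) *ᵥ (Q + Qinf)) - (1 / 2 : K) • ((Ap - An) *ᵥ (Qinf - Q))
        - (1 / 2 : K) • ((Ap + An) *ᵥ Q)
      = (1 / 2 : K) • (Ap *ᵥ Q) - (1 / 2 : K) • (An *ᵥ Q) + An *ᵥ Qinf := by
  simp only [add_mulVec, sub_mulVec, mulVec_add, mulVec_sub]
  match_scalars <;> field_simp <;> ring

theorem completed_square_boundary_identity_general
    (m : ℕ) (Ap An : Matrix (Fin m) (Fin m) ℝ)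
    (hAn : An.IsSymm)
    (A absA absAn : Matrix (Fin m) (Fin m) ℝ)
    (hA : A = Ap + An) (habsA : absA = Ap - An) (habsAn : absAn = -An)
    (Q Qinf : Fin m → ℝ)
    (Fstar : Fin m → ℝ)
    (hFstar : Fstar = (1 / 2 : ℝ) • (A *ᵥ (Q + Qinf)) - (1 / 2 : ℝ) • (absA *ᵥ (Qinf - Q))) :
    (Fstar - (1 / 2 : ℝ) • (A *ᵥ Q)) ⬝ᵥ Q
      = (1 / 2) * (Q ⬝ᵥ (Ap *ᵥ Q))
        + (1 / 2) * ((Q - Qinf) ⬝ᵥ (absAn *ᵥ (Q - Qinf)))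
        - (1 / 2) * (Qinf ⬝ᵥ (absAn *ᵥ Qinf)) := by
  subst hFstar hA habsA habsAn
  rw [upwind_flux_sub_half_mulVec, neg_mulVec, neg_mulVec, dotProduct_neg, dotProduct_neg,
    hAn.dotProduct_mulVec_sub_sub, dotProduct_comm]
  simp only [dotProduct_add, dotProduct_sub, dotProduct_smul, smul_eq_mul]
  ring

/-- **Completed-square boundary identity for the upwind flux.** For symmetric
`A⁺, A⁻ ∈ Mₘ(ℝ)`, with `A = A⁺ + A⁻`, `|A| = A⁺ − A⁻`, `|A⁻| = −A⁻`, interior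
state `Q`, exterior state `Q_∞`, and upwind boundary flux
`F* = ½A(Q+Q_∞) − ½|A|(Q_∞−Q)`, one has
`(F* − ½AQ)ᵀQ = ½QᵀA⁺Q + ½(Q−Q_∞)ᵀ|A⁻|(Q−Q_∞) − ½(Q_∞)ᵀ|A⁻|Q_∞`. -/
theorem completed_square_boundary_identity
    (m : ℕ) (Ap An : Matrix (Fin m) (Fin m) ℝ)
    (hAp : Ap.IsSymm) (hAn : An.IsSymm)
    (A absA absAn : Matrix (Fin m) (Fin m) ℝ)
    (hA : A = Ap + An) (habsA : absA = Ap - An) (habsAn : absAn = -An)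
    (Q Qinf : Fin m → ℝ)
    (Fstar : Fin m → ℝ)
    (hFstar : Fstar = (1 / 2 : ℝ) • (A *ᵥ (Q + Qinf)) - (1 / 2 : ℝ) • (absA *ᵥ (Qinf - Q))) :
    (Fstar - (1 / 2 : ℝ) • (A *ᵥ Q)) ⬝ᵥ Q
      = (1 / 2) * (Q ⬝ᵥ (Ap *ᵥ Q))
        + (1 / 2) * ((Q - Qinf) ⬝ᵥ (absAn *ᵥ (Q - Qinf)))
        - (1 / 2) * (Qinf ⬝ᵥ (absAn *ᵥ Qinf)) :=
  completed_square_boundary_identity_general m Ap An hAn A absA absAn hA habsA habsAn Q Qinf Fstar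
    hFstar
end

section
/- Let A⁺, A⁻ ∈ Mₘ(ℝ) be symmetric with A⁺ positive semidefinite and −A⁻ positive semidefinite, and set A = A⁺ + A⁻ and |A| = A⁺ − A⁻. Let Q, Q_∞ ∈ ℝᵐ and F* = ½ A (Q + Q_∞) − ½ |A| (Q_∞ − Q). Then the boundary quadrature contribution is bounded below: (F* − ½ A Q)ᵀ Q ≥ − ½ (Q_∞)ᵀ (−A⁻) Q_∞. In particular, if Q_∞ = 0 then (F* − ½ A Q)ᵀ Q ≥ 0. -/
/-!
Write `B = -A⁻ ⪰ 0`. Since `A - |A| = 2A⁻`, the flux difference is `F* - ½AQ = A⁻Q_∞ + ½|A|Q`, and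
completing the square in the symmetric form of `B` gives
`(F* - ½AQ)ᵀQ = -½Q_∞ᵀBQ_∞ + ½QᵀA⁺Q + ½(Q - Q_∞)ᵀB(Q - Q_∞)`,
whose last two terms are nonnegative.
-/

open Matrix

variable {n R : Type*} [Fintype n]

lemma Matrix.IsSymm.dotProduct_mulVec_comm_s17 [CommSemiring R] {M : Matrix n n R} (hM : M.IsSymm)
    (x y : n → R) : x ⬝ᵥ M *ᵥ y = y ⬝ᵥ M *ᵥ x := by
  simpa only [hM.eq] using dotProduct_transpose_mulVec M x y

lemma Matrix.IsSymm.dotProduct_mulVec_sub [CommRing R] {M : Matrix n n R} (hM : M.IsSymm)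
    (x y : n → R) :
    (x - y) ⬝ᵥ M *ᵥ (x - y) = x ⬝ᵥ M *ᵥ x - 2 * (x ⬝ᵥ M *ᵥ y) + y ⬝ᵥ M *ᵥ y := by
  rw [mulVec_sub, dotProduct_sub, sub_dotProduct, sub_dotProduct, hM.dotProduct_mulVec_comm_s17 y x]
  ring

lemma upwind_flux_sub_half_central [Field R] [CharZero R] (Ap An : Matrix n n R) (Q Qinf : n → R) :
    (1 / 2 : R) • ((Ap + An) *ᵥ (Q + Qinf)) - (1 / 2 : R) • ((Ap - An) *ᵥ (Qinf - Q))
      - (1 / 2 : R) • ((Ap + An) *ᵥ Q) = An *ᵥ Qinf + (1 / 2 : R) • ((Ap - An) *ᵥ Q) := by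
  simp only [mulVec_add, mulVec_sub, add_mulVec, sub_mulVec]
  module

lemma upwind_boundary_energy [Field R] [CharZero R] (Ap An : Matrix n n R) (hAn : An.IsSymm)
    (Q Qinf : n → R) :
    ((1 / 2 : R) • ((Ap + An) *ᵥ (Q + Qinf)) - (1 / 2 : R) • ((Ap - An) *ᵥ (Qinf - Q))
      - (1 / 2 : R) • ((Ap + An) *ᵥ Q)) ⬝ᵥ Q
      = -(1 / 2) * (Qinf ⬝ᵥ (-An) *ᵥ Qinf) + (1 / 2) * (Q ⬝ᵥ Ap *ᵥ Q)
        + (1 / 2) * ((Q - Qinf) ⬝ᵥ (-An) *ᵥ (Q - Qinf)) := by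
  rw [upwind_flux_sub_half_central, hAn.neg.dotProduct_mulVec_sub, dotProduct_comm]
  simp only [dotProduct_add, dotProduct_smul, sub_mulVec, dotProduct_sub, neg_mulVec,
    dotProduct_neg, smul_eq_mul]
  ring

theorem boundary_contribution_lower_bound_general
    (m : ℕ) (Ap An : Matrix (Fin m) (Fin m) ℝ)
    (hApPSD : Ap.PosSemidef) (hAnPSD : (-An).PosSemidef)
    (A absA : Matrix (Fin m) (Fin m) ℝ)
    (hA : A = Ap + An) (habsA : absA = Ap - An)
    (Q Qinf : Fin m → ℝ)
    (Fstar : Fin m → ℝ)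
    (hFstar : Fstar = (1 / 2 : ℝ) • (A *ᵥ (Q + Qinf)) - (1 / 2 : ℝ) • (absA *ᵥ (Qinf - Q))) :
    (-(1 / 2) * (Qinf ⬝ᵥ ((-An) *ᵥ Qinf)) ≤ (Fstar - (1 / 2 : ℝ) • (A *ᵥ Q)) ⬝ᵥ Q)
    ∧ (Qinf = 0 → 0 ≤ (Fstar - (1 / 2 : ℝ) • (A *ᵥ Q)) ⬝ᵥ Q) := by
  have hAn_symm : An.IsSymm := by
    simpa using (isHermitian_iff_isSymm.mp hAnPSD.isHermitian).neg
  have hAp_nonneg : 0 ≤ Q ⬝ᵥ Ap *ᵥ Q := by simpa using hApPSD.dotProduct_mulVec_nonneg Q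
  have hB_nonneg : 0 ≤ (Q - Qinf) ⬝ᵥ (-An) *ᵥ (Q - Qinf) := by
    simpa using hAnPSD.dotProduct_mulVec_nonneg (Q - Qinf)
  subst hA habsA hFstar
  rw [upwind_boundary_energy Ap An hAn_symm]
  refine ⟨by linarith, ?_⟩
  rintro rfl
  rw [zero_dotProduct]
  linarith

/-- **Lower bound for the boundary quadrature contribution.** For symmetric
`A⁺, A⁻ ∈ Mₘ(ℝ)` with `A⁺` positive semidefinite and `−A⁻` positive
semidefinite, `A = A⁺ + A⁻`, `|A| = A⁺ − A⁻`, interior state `Q`, exterior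
state `Q_∞`, and upwind boundary flux `F* = ½A(Q+Q_∞) − ½|A|(Q_∞−Q)`, one has
`(F* − ½AQ)ᵀQ ≥ −½(Q_∞)ᵀ(−A⁻)Q_∞`; in particular `(F* − ½AQ)ᵀQ ≥ 0` when
`Q_∞ = 0`. -/
theorem boundary_contribution_lower_bound
    (m : ℕ) (Ap An : Matrix (Fin m) (Fin m) ℝ)
    (hAp : Ap.IsSymm) (hAn : An.IsSymm)
    (hApPSD : Ap.PosSemidef) (hAnPSD : (-An).PosSemidef)
    (A absA : Matrix (Fin m) (Fin m) ℝ)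
    (hA : A = Ap + An) (habsA : absA = Ap - An)
    (Q Qinf : Fin m → ℝ)
    (Fstar : Fin m → ℝ)
    (hFstar : Fstar = (1 / 2 : ℝ) • (A *ᵥ (Q + Qinf)) - (1 / 2 : ℝ) • (absA *ᵥ (Qinf - Q))) :
    (-(1 / 2) * (Qinf ⬝ᵥ ((-An) *ᵥ Qinf)) ≤ (Fstar - (1 / 2 : ℝ) • (A *ᵥ Q)) ⬝ᵥ Q)
    ∧ (Qinf = 0 → 0 ≤ (Fstar - (1 / 2 : ℝ) • (A *ᵥ Q)) ⬝ᵥ Q) :=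
  boundary_contribution_lower_bound_general m Ap An hApPSD hAnPSD A absA hA habsA Q Qinf Fstar
    hFstar
end
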